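/- Let I ⊆ ℝ be an interval, p ≥ 2, M : I^p → I^p a weakly contractive mean-type mapping, and E ⊆ I^p a nonempty closed subset of a compact set contained in I^p containing no constant vectors, such that M^n(E) ⊆ E for all n ∈ ℕ. Then the infimum d := inf_{v ∈ E} (max(v) − min(v)) is not attained; in particular if E is compact this yields a contradiction, so no such compact E exists. -/

import Mathlib

open Set Filter Topology

noncomputable def vmax {p : ℕ} (v : Fin p → ℝ) : ℝ := ⨆ i, v i
noncomputable def vmin {p : ℕ} (v : Fin p → ℝ) : ℝ := ⨅ i, v i

/-- The "box" `I^p`. -/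
def box (I : Set ℝ) (p : ℕ) : Set (Fin p → ℝ) := {v | ∀ i, v i ∈ I}

/-- `K` is a mean on `I^p`: internality. -/
def IsMeanOn (I : Set ℝ) (p : ℕ) (K : (Fin p → ℝ) → ℝ) : Prop :=
  ∀ v ∈ box I p, vmin v ≤ K v ∧ K v ≤ vmax v

/-- `M` is a mean-type mapping: each coordinate is a mean. -/
def MeanType (I : Set ℝ) (p : ℕ) (M : (Fin p → ℝ) → (Fin p → ℝ)) : Prop :=
  ∀ v ∈ box I p, ∀ i, vmin v ≤ M v i ∧ M v i ≤ vmax v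

def Nonconstant {p : ℕ} (v : Fin p → ℝ) : Prop := ¬ ∃ c, ∀ i, v i = c

def Contractive (I : Set ℝ) (p : ℕ) (M : (Fin p → ℝ) → (Fin p → ℝ)) : Prop :=
  ∀ v ∈ box I p, Nonconstant v → vmax (M v) - vmin (M v) < vmax v - vmin v

def WeaklyContractive (I : Set ℝ) (p : ℕ) (M : (Fin p → ℝ) → (Fin p → ℝ)) : Prop :=
  ∀ v ∈ box I p, Nonconstant v → ∃ n₀ : ℕ, ∀ n ≥ n₀,
    vmax (M^[n] v) - vmin (M^[n] v) < vmax v - vmin v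

/-- `T(a) = {v ∈ I^p : max v - min v ≤ a}`. -/
def Tset (I : Set ℝ) (p : ℕ) (a : ℝ) : Set (Fin p → ℝ) :=
  {v ∈ box I p | vmax v - vmin v ≤ a}

lemma continuous_vmax (p : ℕ) : Continuous (vmax : (Fin p → ℝ) → ℝ) := by
  rcases isEmpty_or_nonempty (Fin p) with _ | _
  · exact continuous_of_discreteTopology
  · have hsup : vmax = fun v : Fin p → ℝ ↦ Finset.univ.sup' Finset.univ_nonempty fun i ↦ v i :=
      funext fun v ↦ (Finset.sup'_univ_eq_ciSup _).symm
    rw [hsup]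
    exact Continuous.finset_sup'_apply _ fun i _ ↦ continuous_apply i

lemma continuous_vmin (p : ℕ) : Continuous (vmin : (Fin p → ℝ) → ℝ) := by
  rcases isEmpty_or_nonempty (Fin p) with _ | _
  · exact continuous_of_discreteTopology
  · have hinf : vmin = fun v : Fin p → ℝ ↦ Finset.univ.inf' Finset.univ_nonempty fun i ↦ v i :=
      funext fun v ↦ (Finset.inf'_univ_eq_ciInf _).symm
    rw [hinf]
    exact Continuous.finset_inf'_apply _ fun i _ ↦ continuous_apply i

lemma not_isCompact_of_forall_exists_lt {X : Type*} [TopologicalSpace X] {f : X → ℝ}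
    (hf : Continuous f) {E : Set X} (hE : E.Nonempty) (h : ∀ x ∈ E, ∃ y ∈ E, f y < f x) :
    ¬ IsCompact E := fun hc ↦ by
  obtain ⟨x, hx, hmin⟩ := hc.exists_isMinOn hE hf.continuousOn
  obtain ⟨y, hy, hlt⟩ := h x hx
  exact (hmin hy).not_gt hlt

lemma WeaklyContractive.exists_iterate_osc_lt {I : Set ℝ} {p : ℕ}
    {M : (Fin p → ℝ) → (Fin p → ℝ)} (hW : WeaklyContractive I p M) {v : Fin p → ℝ}
    (hv : v ∈ box I p) (hnc : Nonconstant v) :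
    ∃ n, vmax (M^[n] v) - vmin (M^[n] v) < vmax v - vmin v :=
  let ⟨n₀, hn₀⟩ := hW v hv hnc
  ⟨n₀, hn₀ n₀ le_rfl⟩

theorem stmt15_general (I : Set ℝ) (p : ℕ)
    (M : (Fin p → ℝ) → (Fin p → ℝ))
    (hW : WeaklyContractive I p M)
    (E C : Set (Fin p → ℝ)) (hEne : E.Nonempty) (hEC : E ⊆ C)
    (hCbox : C ⊆ box I p)
    (hEnc : ∀ v ∈ E, Nonconstant v)
    (hinv : ∀ n : ℕ, ∀ v ∈ E, M^[n] v ∈ E) :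
    (∀ v₀ ∈ E, ∃ v₁ ∈ E, vmax v₁ - vmin v₁ < vmax v₀ - vmin v₀) ∧
    ¬ IsCompact E := by
  have hdecr : ∀ v₀ ∈ E, ∃ v₁ ∈ E, vmax v₁ - vmin v₁ < vmax v₀ - vmin v₀ := by
    intro v₀ hv₀
    obtain ⟨n, hn⟩ := hW.exists_iterate_osc_lt (hCbox (hEC hv₀)) (hEnc v₀ hv₀)
    exact ⟨M^[n] v₀, hinv n v₀ hv₀, hn⟩
  exact ⟨hdecr,
    not_isCompact_of_forall_exists_lt ((continuous_vmax p).sub (continuous_vmin p)) hEne hdecr⟩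

theorem stmt15 (I : Set ℝ) (hI : I.OrdConnected) (p : ℕ) (hp : 2 ≤ p)
    (M : (Fin p → ℝ) → (Fin p → ℝ)) (hMT : MeanType I p M)
    (hW : WeaklyContractive I p M)
    (E C : Set (Fin p → ℝ)) (hEne : E.Nonempty) (hEC : E ⊆ C)
    (hCcomp : IsCompact C) (hCbox : C ⊆ box I p)
    (hEclosed : IsClosed (Subtype.val ⁻¹' E : Set ↥(box I p)))
    (hEnc : ∀ v ∈ E, Nonconstant v)
    (hinv : ∀ n : ℕ, ∀ v ∈ E, M^[n] v ∈ E) :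
    (∀ v₀ ∈ E, ∃ v₁ ∈ E, vmax v₁ - vmin v₁ < vmax v₀ - vmin v₀) ∧
    ¬ IsCompact E :=
  stmt15_general I p M hW E C hEne hEC hCbox hEnc hinv
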